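/- In the Firefighter problem on the infinite strong grid with initial burned vertex (0,0), firefighters protecting four vertices at each step can contain the fire; moreover there is a valid protection sequence, protecting four unburned, unprotected vertices per step, under which no vertex is burned after step 8, so only finitely many vertices are ever burned. -/

import Mathlib

/-- Adjacency in the infinite strong grid: distinct `(a,b)` and `(c,d)` are adjacent
iff `max |a-c| |b-d| = 1` (this equation already forces the vertices to be distinct). -/
def strongAdj (u v : ℤ × ℤ) : Prop := max |u.1 - v.1| |u.2 - v.2| = 1

/-- The set of vertices protected by the end of step `t`, where `Pfun s` is the set of
vertices protected during step `s ≥ 1`. -/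
def ffProt (Pfun : ℕ → Finset (ℤ × ℤ)) : ℕ → Set (ℤ × ℤ)
  | 0 => ∅
  | t + 1 => ffProt Pfun t ∪ ↑(Pfun (t + 1))

/-- The set of burned vertices at the end of step `t` in the Firefighter problem on the
strong grid with initial burned vertex `(0,0)`: at each step `t+1`, after the vertices
`Pfun (t+1)` are protected, the fire spreads from every burned vertex to every
unprotected neighbour. -/
def ffBurn (Pfun : ℕ → Finset (ℤ × ℤ)) : ℕ → Set (ℤ × ℤ)
  | 0 => {((0 : ℤ), (0 : ℤ))}
  | t + 1 => ffBurn Pfun t ∪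
      {v | (∃ u ∈ ffBurn Pfun t, strongAdj u v) ∧ v ∉ ffProt Pfun (t + 1)}

/-! Eight explicit rounds of four protections enclose the fire: after step 8 every neighbour
of a burned vertex is burned or protected, which is a finite computation. From then on the
fire cannot spread, so the burned set is constant and finite. -/

def strongNbrs (u : ℤ × ℤ) : Finset (ℤ × ℤ) :=
  {(u.1 - 1, u.2 - 1), (u.1 - 1, u.2), (u.1 - 1, u.2 + 1), (u.1, u.2 - 1),
   (u.1, u.2 + 1), (u.1 + 1, u.2 - 1), (u.1 + 1, u.2), (u.1 + 1, u.2 + 1)}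

theorem strongAdj_iff_mem_strongNbrs {u v : ℤ × ℤ} : strongAdj u v ↔ v ∈ strongNbrs u := by
  obtain ⟨a, b⟩ := u
  obtain ⟨c, d⟩ := v
  simp only [strongAdj, strongNbrs, Finset.mem_insert, Finset.mem_singleton, Prod.mk.injEq,
    abs_eq_max_neg]
  omega

namespace Firefighter

variable (Pfun : ℕ → Finset (ℤ × ℤ))

def protFinset : ℕ → Finset (ℤ × ℤ)
  | 0 => ∅
  | t + 1 => protFinset t ∪ Pfun (t + 1)

def burnFinset : ℕ → Finset (ℤ × ℤ)
  | 0 => {(0, 0)}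
  | t + 1 => burnFinset t ∪ ((burnFinset t).biUnion strongNbrs \ protFinset Pfun (t + 1))

theorem coe_protFinset (t : ℕ) : (protFinset Pfun t : Set (ℤ × ℤ)) = ffProt Pfun t := by
  induction t with
  | zero => simp [protFinset, ffProt]
  | succ t ih => simp [protFinset, ffProt, ih]

theorem coe_burnFinset (t : ℕ) : (burnFinset Pfun t : Set (ℤ × ℤ)) = ffBurn Pfun t := by
  induction t with
  | zero => simp [burnFinset, ffBurn]
  | succ t ih =>
    ext v
    simp [burnFinset, ffBurn, ← ih, ← coe_protFinset, strongAdj_iff_mem_strongNbrs]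

theorem ffBurn_finite (t : ℕ) : (ffBurn Pfun t).Finite :=
  coe_burnFinset Pfun t ▸ (burnFinset Pfun t).finite_toSet

theorem ffProt_mono : Monotone (ffProt Pfun) :=
  monotone_nat_of_le_succ fun _ => Set.subset_union_left

theorem ffBurn_mono : Monotone (ffBurn Pfun) :=
  monotone_nat_of_le_succ fun _ => Set.subset_union_left

theorem fst_le_of_mem_ffBurn {t : ℕ} {p : ℤ × ℤ} (hp : p ∈ ffBurn Pfun t) : p.1 ≤ t := by
  induction t generalizing p with
  | zero => simp_all [ffBurn]
  | succ t ih =>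
    rcases hp with hp | ⟨⟨u, hu, huv⟩, -⟩
    · have := ih hp
      push_cast
      omega
    · have := ih hu
      simp only [strongAdj, abs_eq_max_neg] at huv
      push_cast
      omega

theorem fst_le_of_mem_ffProt (hP : ∀ s, ∀ p ∈ Pfun s, p.1 ≤ s) {t : ℕ} {p : ℤ × ℤ}
    (hp : p ∈ ffProt Pfun t) : p.1 ≤ t := by
  induction t with
  | zero => simp [ffProt] at hp
  | succ t ih =>
    rcases hp with hp | hp
    · have := ih hp
      push_cast
      omega
    · exact hP _ _ hp

theorem ffBurn_closed_of_burnFinset {n : ℕ}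
    (h : ∀ u ∈ burnFinset Pfun n, strongNbrs u ⊆ burnFinset Pfun n ∪ protFinset Pfun n) :
    ∀ u ∈ ffBurn Pfun n, ∀ v, strongAdj u v → v ∈ ffBurn Pfun n ∪ ffProt Pfun n := by
  intro u hu v huv
  rw [← coe_burnFinset, Finset.mem_coe] at hu
  rw [← coe_burnFinset, ← coe_protFinset, ← Finset.coe_union, Finset.mem_coe]
  exact h u hu (strongAdj_iff_mem_strongNbrs.mp huv)

theorem ffBurn_eq_of_closed {n : ℕ}
    (hclosed : ∀ u ∈ ffBurn Pfun n, ∀ v, strongAdj u v → v ∈ ffBurn Pfun n ∪ ffProt Pfun n) :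
    ∀ t, n ≤ t → ffBurn Pfun t = ffBurn Pfun n := by
  intro t ht
  induction t, ht using Nat.le_induction with
  | base => rfl
  | succ t hnt ih =>
    rw [ffBurn, ih, Set.union_eq_left]
    rintro v ⟨⟨u, hu, huv⟩, hv⟩
    rcases hclosed u hu v huv with hburn | hprot
    · exact hburn
    · exact absurd (ffProt_mono Pfun (hnt.trans t.le_succ) hprot) hv

theorem iUnion_ffBurn_eq {n : ℕ} (hstable : ∀ t, n ≤ t → ffBurn Pfun t = ffBurn Pfun n) :
    ⋃ t, ffBurn Pfun t = ffBurn Pfun n := by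
  refine (Set.iUnion_subset fun t => ?_).antisymm (Set.subset_iUnion _ n)
  rcases le_total t n with h | h
  · exact ffBurn_mono Pfun h
  · exact (hstable t h).le

end Firefighter

open Firefighter

/-- From step 9 on the fire is enclosed, and the firefighters of step `t` go to the column
`x = t`, beyond the reach of the fire and of all earlier firefighters. -/
def strategy : ℕ → Finset (ℤ × ℤ)
  | 1 => {(1, 0), (-1, -1), (0, -1), (1, -1)}
  | 2 => {(2, 2), (-2, -1), (2, 1), (2, 0)}
  | 3 => {(-3, 0), (-3, -1), (-3, 1), (2, 3)}
  | 4 => {(-4, 4), (-4, 1), (-4, 3), (-4, 2)}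
  | 5 => {(3, 4), (3, 3), (3, 5), (-4, 5)}
  | 6 => {(-3, 6), (3, 6), (-4, 6), (-2, 6)}
  | 7 => {(0, 7), (3, 7), (-2, 7), (-1, 7)}
  | 8 => {(3, 8), (1, 8), (0, 8), (2, 8)}
  | t => ({(t : ℤ)} : Finset ℤ) ×ˢ ({0, 1, 2, 3} : Finset ℤ)

theorem strategy_of_nine_le {t : ℕ} (ht : 9 ≤ t) :
    strategy t = ({(t : ℤ)} : Finset ℤ) ×ˢ ({0, 1, 2, 3} : Finset ℤ) := by
  obtain ⟨k, rfl⟩ := Nat.exists_eq_add_of_le' ht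
  rfl

theorem card_strategy (t : ℕ) : (strategy (t + 1)).card = 4 := by
  rcases Nat.lt_or_ge t 8 with ht | ht
  · interval_cases t <;> rfl
  · simp [strategy_of_nine_le (by omega : 9 ≤ t + 1)]

theorem fst_le_of_mem_strategy (s : ℕ) : ∀ p ∈ strategy s, p.1 ≤ s := by
  rcases Nat.lt_or_ge s 9 with hs | hs
  · interval_cases s <;> decide +kernel
  · rw [strategy_of_nine_le hs]
    rintro ⟨a, b⟩ hp
    simp only [Finset.mem_product, Finset.mem_singleton] at hp
    omega

theorem strategy_disjoint (t : ℕ) :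
    Disjoint (strategy (t + 1) : Set (ℤ × ℤ)) (ffBurn strategy t ∪ ffProt strategy t) := by
  rcases Nat.lt_or_ge t 8 with ht | ht
  · rw [← coe_burnFinset, ← coe_protFinset, ← Finset.coe_union, Finset.disjoint_coe]
    interval_cases t <;> decide +kernel
  · rw [strategy_of_nine_le (by omega : 9 ≤ t + 1), Set.disjoint_right]
    intro p hp hpt
    have hp_le : p.1 ≤ t := by
      rcases hp with hp | hp
      · exact fst_le_of_mem_ffBurn strategy hp
      · exact fst_le_of_mem_ffProt strategy fst_le_of_mem_strategy hp
    simp only [Finset.coe_product, Set.mem_prod, Finset.coe_singleton,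
      Set.mem_singleton_iff] at hpt
    omega

theorem strategy_encloses :
    ∀ u ∈ ffBurn strategy 8, ∀ v, strongAdj u v → v ∈ ffBurn strategy 8 ∪ ffProt strategy 8 :=
  ffBurn_closed_of_burnFinset strategy (by decide +kernel)

/-- In the Firefighter problem on the infinite strong grid with initial burned vertex
`(0,0)`, firefighters protecting four unburned, unprotected vertices at each step can
contain the fire; indeed there is a valid protection sequence under which no vertex is
burned after step `8`, so only finitely many vertices are ever burned. -/
theorem four_firefighters_contain_strong_grid :
    ∃ Pfun : ℕ → Finset (ℤ × ℤ),
      (∀ t : ℕ, (Pfun (t + 1)).card = 4 ∧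
        (↑(Pfun (t + 1)) : Set (ℤ × ℤ)) ∩ (ffBurn Pfun t ∪ ffProt Pfun t) = ∅) ∧
      (∀ t : ℕ, 8 ≤ t → ffBurn Pfun t = ffBurn Pfun 8) ∧
      (⋃ t, ffBurn Pfun t).Finite := by
  have hstable := ffBurn_eq_of_closed strategy strategy_encloses
  refine ⟨strategy, fun t => ⟨card_strategy t, ?_⟩, hstable, ?_⟩
  · exact Set.disjoint_iff_inter_eq_empty.mp (strategy_disjoint t)
  · exact iUnion_ffBurn_eq strategy hstable ▸ ffBurn_finite strategy 8
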